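/- arXiv:2201.12494 — 3 statements merged into one kernel-verified Lean document; each statement's English description precedes it below -/
import Mathlib

section
/- Let ψ : [0,1] → ℝ be continuous, real-valued, and not identically zero, and let (λ_n) be a real sequence with λ_n → +∞. Then limsup_{n→∞} |∫_0^1 exp(i λ_n ∫_0^x ψ(w) dw) dx| < 1. -/
/-!
Near a point where `ψ ≠ 0`, `ψ` keeps one sign on some `[a, b] ⊆ (0, 1)`, so the phase
`Φ x = ∫₀ˣ ψ` is strictly monotone there. Substituting `u = Φ x` turns `∫ₐᵇ exp (i λ Φ x) dx`
into the Fourier integral of the density `1 / ψ (Φ⁻¹ u)` over `[Φ a, Φ b]`, which tends to `0`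
by the Riemann–Lebesgue lemma. As the integrand has modulus one,
`|∫₀¹| ≤ 1 - (b - a) + |∫ₐᵇ|`, so the limsup is at most `1 - (b - a)`.
-/

open Filter MeasureTheory Set Complex Real
open scoped Topology Interval

theorem tendsto_setIntegral_exp_mul_cocompact (H : ℝ → ℂ) {s : Set ℝ} (hs : MeasurableSet s) :
    Tendsto (fun t : ℝ => ∫ u in s, exp (I * t * u) * H u) (cocompact ℝ) (𝓝 0) := by
  have hscale : Tendsto (fun t : ℝ => t * (-(2 * π))⁻¹) (cocompact ℝ) (cocompact ℝ) :=
    tendsto_cocompact_mul_right₀ (by simp [pi_ne_zero])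
  refine ((Real.tendsto_integral_exp_smul_cocompact (s.indicator H)).comp hscale).congr fun t => ?_
  rw [Function.comp_apply, ← integral_indicator hs]
  congr 1 with u
  rw [Circle.smul_def, Real.fourierChar_apply, indicator_mul_right, smul_eq_mul]
  congr 2
  rw [show 2 * π * -(u * (t * (-(2 * π))⁻¹)) = t * u by field_simp]
  push_cast
  ring

-- No integrability hypothesis: for non-integrable `H` the integrals are the junk value `0`.
theorem tendsto_intervalIntegral_exp_mul_cocompact (H : ℝ → ℂ) (α β : ℝ) :
    Tendsto (fun t : ℝ => ∫ u in α..β, exp (I * t * u) * H u) (cocompact ℝ) (𝓝 0) := by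
  simpa only [intervalIntegral, sub_zero] using
    (tendsto_setIntegral_exp_mul_cocompact H measurableSet_Ioc).sub
      (tendsto_setIntegral_exp_mul_cocompact H measurableSet_Ioc)

theorem tendsto_integral_exp_mul_cocompact_of_deriv_pos {Φ φ : ℝ → ℝ} {a b : ℝ}
    (hΦ : ∀ x ∈ [[a, b]], HasDerivAt Φ (φ x) x) (hφ : ∀ x ∈ [[a, b]], 0 < φ x) :
    Tendsto (fun t : ℝ => ∫ x in a..b, exp (I * t * Φ x)) (cocompact ℝ) (𝓝 0) := by
  have hmono : StrictMonoOn Φ [[a, b]] :=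
    strictMonoOn_of_deriv_pos (convex_uIcc a b)
      (fun x hx => (hΦ x hx).continuousAt.continuousWithinAt) fun x hx => by
        rw [(hΦ x (interior_subset hx)).deriv]
        exact hφ x (interior_subset hx)
  have hinv : LeftInvOn (Function.invFunOn Φ [[a, b]]) Φ [[a, b]] :=
    hmono.injOn.leftInvOn_invFunOn
  -- The change of variables for monotone `Φ` puts no condition on the new integrand, so the
  -- bare inverse `invFunOn` suffices.
  refine (tendsto_intervalIntegral_exp_mul_cocompact
    (fun u => ((φ (Function.invFunOn Φ [[a, b]] u))⁻¹ : ℂ)) (Φ a) (Φ b)).congr fun t => ?_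
  rw [← intervalIntegral.integral_deriv_smul_comp_of_deriv_nonneg
    (fun x hx => (hΦ x hx).continuousAt.continuousWithinAt)
    (fun x hx => hΦ x (Ioo_subset_Icc_self hx)) (fun x hx => (hφ x (Ioo_subset_Icc_self hx)).le)]
  refine intervalIntegral.integral_congr fun x hx => ?_
  have hφx : (φ x : ℂ) ≠ 0 := ofReal_ne_zero.2 (hφ x hx).ne'
  simp only [Function.comp_apply, hinv hx, real_smul]
  field_simp

theorem tendsto_integral_exp_mul_cocompact_of_deriv_neg {Φ φ : ℝ → ℝ} {a b : ℝ}
    (hΦ : ∀ x ∈ [[a, b]], HasDerivAt Φ (φ x) x) (hφ : ∀ x ∈ [[a, b]], φ x < 0) :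
    Tendsto (fun t : ℝ => ∫ x in a..b, exp (I * t * Φ x)) (cocompact ℝ) (𝓝 0) := by
  refine ((tendsto_integral_exp_mul_cocompact_of_deriv_pos (fun x hx => (hΦ x hx).neg)
    fun x hx => neg_pos.2 (hφ x hx)).comp (Homeomorph.neg ℝ).map_cocompact.le).congr fun t => ?_
  simp only [Function.comp_apply, Homeomorph.coe_neg, Pi.neg_apply, ofReal_neg, mul_neg, neg_mul,
    neg_neg]

theorem exists_Icc_subset_of_mem_nhds {s : Set ℝ} {x₀ : ℝ} (hs : s ∈ 𝓝 x₀) :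
    ∃ a b, a < b ∧ Icc a b ⊆ s := by
  obtain ⟨ε, hε, hball⟩ := Metric.mem_nhds_iff.1 hs
  refine ⟨x₀ - ε / 2, x₀ + ε / 2, by linarith, ?_⟩
  rw [← Real.closedBall_eq_Icc]
  exact (Metric.closedBall_subset_ball (half_lt_self hε)).trans hball

theorem exists_Icc_subset_forall_pos_or_forall_neg {ψ : ℝ → ℝ} {x₀ : ℝ} {U : Set ℝ}
    (hψ : ContinuousAt ψ x₀) (hψx₀ : ψ x₀ ≠ 0) (hU : U ∈ 𝓝 x₀) :
    ∃ a b, a < b ∧ Icc a b ⊆ U ∧ ((∀ x ∈ Icc a b, 0 < ψ x) ∨ ∀ x ∈ Icc a b, ψ x < 0) := by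
  rcases hψx₀.lt_or_gt with hneg | hpos
  · obtain ⟨a, b, hab, hsub⟩ :=
      exists_Icc_subset_of_mem_nhds (inter_mem hU (hψ.eventually (gt_mem_nhds hneg)))
    exact ⟨a, b, hab, fun x hx => (hsub hx).1, Or.inr fun x hx => (hsub hx).2⟩
  · obtain ⟨a, b, hab, hsub⟩ :=
      exists_Icc_subset_of_mem_nhds (inter_mem hU (hψ.eventually (lt_mem_nhds hpos)))
    exact ⟨a, b, hab, fun x hx => (hsub hx).1, Or.inl fun x hx => (hsub hx).2⟩

theorem ContinuousOn.hasDerivAt_intervalIntegral {E : Type*} [NormedAddCommGroup E]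
    [NormedSpace ℝ E] [CompleteSpace E] {f : ℝ → E} {c d x : ℝ} (hf : ContinuousOn f (Icc c d))
    (hx : x ∈ Ioo c d) : HasDerivAt (fun u => ∫ w in c..u, f w) (f x) x :=
  intervalIntegral.integral_hasDerivAt_right
    ((hf.mono (Icc_subset_Icc_right hx.2.le)).intervalIntegrable_of_Icc hx.1.le)
    ((hf.mono Ioo_subset_Icc_self).stronglyMeasurableAtFilter isOpen_Ioo x hx)
    (hf.continuousAt (Icc_mem_nhds hx.1 hx.2))

theorem norm_intervalIntegral_le_sub_add_norm {E : Type*} [NormedAddCommGroup E]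
    [NormedSpace ℝ E] {f : ℝ → E} {c a b d : ℝ} (hca : c ≤ a) (hab : a ≤ b) (hbd : b ≤ d)
    (hf : IntervalIntegrable f volume c d) (hf1 : ∀ x ∈ Icc c d, ‖f x‖ ≤ 1) :
    ‖∫ x in c..d, f x‖ ≤ (d - c) - (b - a) + ‖∫ x in a..b, f x‖ := by
  have hcd : c ≤ d := hca.trans (hab.trans hbd)
  have hint : ∀ u ∈ Icc c d, ∀ v ∈ Icc c d, IntervalIntegrable f volume u v :=
    fun u hu v hv => hf.mono_set (by rw [uIcc_of_le hcd]; exact uIcc_subset_Icc hu hv)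
  have hlen : ∀ u v, c ≤ u → u ≤ v → v ≤ d → ‖∫ x in u..v, f x‖ ≤ v - u := by
    intro u v hcu huv hvd
    have := intervalIntegral.norm_integral_le_of_norm_le_const (a := u) (b := v) (C := 1)
      fun x hx => hf1 x (by rw [uIoc_of_le huv] at hx; exact ⟨hcu.trans hx.1.le, hx.2.trans hvd⟩)
    rwa [one_mul, abs_of_nonneg (sub_nonneg.2 huv)] at this
  have hac : a ∈ Icc c d := ⟨hca, hab.trans hbd⟩
  have hbc : b ∈ Icc c d := ⟨hca.trans hab, hbd⟩
  rw [← intervalIntegral.integral_add_adjacent_intervals (hint c (left_mem_Icc.2 hcd) a hac)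
      (hint a hac d (right_mem_Icc.2 hcd)),
    ← intervalIntegral.integral_add_adjacent_intervals (hint a hac b hbc)
      (hint b hbc d (right_mem_Icc.2 hcd))]
  calc _ ≤ ‖∫ x in c..a, f x‖ + (‖∫ x in a..b, f x‖ + ‖∫ x in b..d, f x‖) :=
        (norm_add_le _ _).trans (add_le_add_right (norm_add_le _ _) _)
    _ ≤ _ := by linarith [hlen c a le_rfl hca (hab.trans hbd), hlen b d (hca.trans hab) hbd le_rfl]

theorem limsup_le_of_eventually_le_add_of_tendsto_zero {ι : Type*} {l : Filter ι} [NeBot l]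
    {u v : ι → ℝ} {c : ℝ} (hu : IsBoundedUnder (· ≥ ·) l u) (hv : Tendsto v l (𝓝 0))
    (huv : ∀ᶠ i in l, u i ≤ c + v i) : limsup u l ≤ c := by
  have hcv : Tendsto (fun i => c + v i) l (𝓝 c) := by simpa using tendsto_const_nhds.add hv
  exact (limsup_le_limsup huv hu.isCoboundedUnder_le hcv.isBoundedUnder_le).trans_eq hcv.limsup_eq

/-- Stationary-phase lemma: for a continuous, not identically zero `ψ : [0,1] → ℝ` and a real
sequence `λ_n → +∞`, `limsup_n |∫_0^1 exp(i λ_n ∫_0^x ψ) dx| < 1`. -/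
theorem stmt0 (ψ : ℝ → ℝ) (hψ : ContinuousOn ψ (Icc 0 1))
    (hne : ∃ x ∈ Icc (0:ℝ) 1, ψ x ≠ 0)
    (lam : ℕ → ℝ) (hlam : Tendsto lam atTop atTop) :
    Filter.limsup
      (fun n => ‖∫ x in (0:ℝ)..1,
        Complex.exp (Complex.I * (lam n : ℂ) * ((∫ w in (0:ℝ)..x, ψ w : ℝ) : ℂ))‖)
      atTop < 1 := by
  set Φ : ℝ → ℝ := fun x => ∫ w in (0:ℝ)..x, ψ w
  obtain ⟨x₁, hx₁, hψx₁⟩ : ∃ x ∈ Ioo (0:ℝ) 1, ψ x ≠ 0 := by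
    by_contra! hzero
    obtain ⟨x₀, hx₀, hψx₀⟩ := hne
    exact hψx₀ (EqOn.of_subset_closure hzero hψ continuousOn_const Ioo_subset_Icc_self
      (closure_Ioo zero_ne_one).ge hx₀)
  obtain ⟨a, b, hab, hsub, hsign⟩ := exists_Icc_subset_forall_pos_or_forall_neg
    (hψ.continuousAt (Icc_mem_nhds hx₁.1 hx₁.2)) hψx₁ (Ioo_mem_nhds hx₁.1 hx₁.2)
  have hΦ : ∀ x ∈ [[a, b]], HasDerivAt Φ (ψ x) x := fun x hx =>
    hψ.hasDerivAt_intervalIntegral (hsub (uIcc_of_le hab.le ▸ hx))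
  have hosc : Tendsto (fun n => ‖∫ x in a..b, exp (I * lam n * Φ x)‖) atTop (𝓝 0) := by
    rw [← uIcc_of_le hab.le] at hsign
    simpa using ((hsign.elim (tendsto_integral_exp_mul_cocompact_of_deriv_pos hΦ)
      (tendsto_integral_exp_mul_cocompact_of_deriv_neg hΦ)).comp
        (hlam.mono_right atTop_le_cocompact)).norm
  have hΦc : ContinuousOn Φ (Icc 0 1) := by
    simpa only [uIcc_of_le zero_le_one] using
      intervalIntegral.continuousOn_primitive_interval (μ := volume) (a := 0) (b := 1)
        (by simpa only [uIcc_of_le zero_le_one] using hψ.integrableOn_Icc (μ := volume))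
  have hbound : ∀ n, ‖∫ x in (0:ℝ)..1, exp (I * lam n * Φ x)‖
      ≤ 1 - (b - a) + ‖∫ x in a..b, exp (I * lam n * Φ x)‖ := fun n => by
    have hcont : ContinuousOn (fun x => exp (I * lam n * Φ x)) (Icc 0 1) := by fun_prop
    simpa using norm_intervalIntegral_le_sub_add_norm (hsub (left_mem_Icc.2 hab.le)).1.le hab.le
      (hsub (right_mem_Icc.2 hab.le)).2.le (hcont.intervalIntegrable_of_Icc zero_le_one)
      fun x _ => by simp [norm_exp]
  calc _ ≤ 1 - (b - a) := limsup_le_of_eventually_le_add_of_tendsto_zero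
        (isBoundedUnder_of_eventually_ge (.of_forall fun _ => norm_nonneg _)) hosc
        (.of_forall hbound)
    _ < 1 := by linarith
end

section
/- Let b₁, b₂ : [0,1] → ℝ be continuous and nowhere vanishing, let c ∈ ℝ with c ≠ 0, and let J₁ : [0,1] → ℝ be a C¹ solution of J₁'(x) = -(b₁(x)⁻¹ + b₂(x)⁻¹) J₁(x) + b₂(x)⁻¹ c satisfying J₁(0) = J₁(1). Then J₁ does not change sign on [0,1]: either J₁(x) ≥ 0 for all x or J₁(x) ≤ 0 for all x. -/
/-!
With `P x = ∫₀ˣ (b₁⁻¹ + b₂⁻¹)`, the equation gives `(exp P · J₁)' = exp P · b₂⁻¹ c`, whose sign is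
constant because `b₂` cannot vanish. If, say, `exp P · J₁` is monotone, then `J₁ 0 ≥ 0` forces
`J₁ ≥ 0` by comparing with `x = 0`, while `J₁ 0 ≤ 0` forces `J₁ ≤ 0` by comparing with `x = 1` and
using `J₁ 1 = J₁ 0`.
-/

open Set

theorem IsPreconnected.lt_or_gt_of_ne {X α : Type*} [TopologicalSpace X] [LinearOrder α]
    [TopologicalSpace α] [OrderClosedTopology α] {s : Set X} (hs : IsPreconnected s)
    {f : X → α} (hf : ContinuousOn f s) {c : α} (hfc : ∀ x ∈ s, f x ≠ c) :
    (∀ x ∈ s, c < f x) ∨ (∀ x ∈ s, f x < c) := by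
  by_contra! ⟨⟨x, hx, hxc⟩, ⟨y, hy, hyc⟩⟩
  obtain ⟨z, hz, hzc⟩ := hs.intermediate_value hx hy hf ⟨hxc, hyc⟩
  exact hfc z hz hzc

theorem nonneg_or_nonpos_of_monotoneOn_mul {α : Type*} [Preorder α] {E J : α → ℝ} {s t : α}
    (hE : ∀ x ∈ Icc s t, 0 < E x) (hEJ : MonotoneOn (fun x => E x * J x) (Icc s t))
    (hper : J s = J t) :
    (∀ x ∈ Icc s t, 0 ≤ J x) ∨ (∀ x ∈ Icc s t, J x ≤ 0) := by
  rcases le_total 0 (J s) with hJs | hJs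
  · refine .inl fun x hx => nonneg_of_mul_nonneg_right ?_ (hE x hx)
    have hs : s ∈ Icc s t := left_mem_Icc.2 (hx.1.trans hx.2)
    calc 0 ≤ E s * J s := mul_nonneg (hE s hs).le hJs
      _ ≤ E x * J x := hEJ hs hx hx.1
  · refine .inr fun x hx => nonpos_of_mul_nonpos_right ?_ (hE x hx)
    have ht : t ∈ Icc s t := right_mem_Icc.2 (hx.1.trans hx.2)
    calc E x * J x ≤ E t * J t := hEJ hx ht hx.2
      _ ≤ 0 := mul_nonpos_of_nonneg_of_nonpos (hE t ht).le (hper ▸ hJs)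

theorem monotoneOn_exp_integral_mul {p g J : ℝ → ℝ} {s t : ℝ}
    (hp : ContinuousOn p (Icc s t)) (hJc : ContinuousOn J (Icc s t))
    (hJ : ∀ x ∈ Ioo s t, HasDerivAt J (-p x * J x + g x) x) (hg : ∀ x ∈ Ioo s t, 0 ≤ g x) :
    MonotoneOn (fun x => Real.exp (∫ y in s..x, p y) * J x) (Icc s t) := by
  have hP : ContinuousOn (fun x => ∫ y in s..x, p y) (Icc s t) := fun x hx => by
    refine (intervalIntegral.continuousOn_primitive_interval ?_).mono Icc_subset_uIcc x hx
    exact (uIcc_of_le (hx.1.trans hx.2)).symm ▸ hp.integrableOn_Icc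
  have hP' : ∀ x ∈ Ioo s t, HasDerivAt (fun x => ∫ y in s..x, p y) (p x) x := fun x hx =>
    intervalIntegral.integral_hasDerivAt_right
      ((hp.mono (Icc_subset_Icc_right hx.2.le)).intervalIntegrable_of_Icc hx.1.le)
      ((hp.mono Ioo_subset_Icc_self).stronglyMeasurableAtFilter isOpen_Ioo x hx)
      (hp.continuousAt (Icc_mem_nhds hx.1 hx.2))
  refine monotoneOn_of_hasDerivWithinAt_nonneg (convex_Icc s t)
    ((Real.continuous_exp.comp_continuousOn hP).mul hJc) (fun x hx => ?_) (fun x hx => ?_)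
    (f' := fun x => Real.exp (∫ y in s..x, p y) * g x)
  · rw [interior_Icc] at hx
    exact (((hP' x hx).exp.mul (hJ x hx)).congr_deriv (by ring)).hasDerivWithinAt
  · rw [interior_Icc] at hx
    exact mul_nonneg (Real.exp_pos _).le (hg x hx)

theorem nonneg_or_nonpos_of_hasDerivAt_of_nonneg {p g J : ℝ → ℝ} {s t : ℝ}
    (hp : ContinuousOn p (Icc s t)) (hJc : ContinuousOn J (Icc s t))
    (hJ : ∀ x ∈ Ioo s t, HasDerivAt J (-p x * J x + g x) x) (hg : ∀ x ∈ Ioo s t, 0 ≤ g x)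
    (hper : J s = J t) :
    (∀ x ∈ Icc s t, 0 ≤ J x) ∨ (∀ x ∈ Icc s t, J x ≤ 0) :=
  nonneg_or_nonpos_of_monotoneOn_mul (fun _ _ => Real.exp_pos _)
    (monotoneOn_exp_integral_mul hp hJc hJ hg) hper

theorem nonneg_or_nonpos_of_hasDerivAt {p g J : ℝ → ℝ} {s t : ℝ}
    (hp : ContinuousOn p (Icc s t)) (hJc : ContinuousOn J (Icc s t))
    (hJ : ∀ x ∈ Ioo s t, HasDerivAt J (-p x * J x + g x) x)
    (hg : (∀ x ∈ Ioo s t, 0 ≤ g x) ∨ (∀ x ∈ Ioo s t, g x ≤ 0)) (hper : J s = J t) :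
    (∀ x ∈ Icc s t, 0 ≤ J x) ∨ (∀ x ∈ Icc s t, J x ≤ 0) := by
  rcases hg with hg | hg
  · exact nonneg_or_nonpos_of_hasDerivAt_of_nonneg hp hJc hJ hg hper
  · have hJneg : ∀ x ∈ Ioo s t, HasDerivAt (-J) (-p x * (-J) x + -g x) x := fun x hx =>
      (hJ x hx).neg.congr_deriv (by simp only [Pi.neg_apply]; ring)
    rcases nonneg_or_nonpos_of_hasDerivAt_of_nonneg hp hJc.neg hJneg
      (fun x hx => neg_nonneg.2 (hg x hx)) (congrArg Neg.neg hper) with h | h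
    · exact .inr fun x hx => neg_nonneg.1 (h x hx)
    · exact .inl fun x hx => neg_nonpos.1 (h x hx)

theorem stmt5_general (b₁ b₂ : ℝ → ℝ)
    (hb₁ : ContinuousOn b₁ (Icc 0 1)) (hb₂ : ContinuousOn b₂ (Icc 0 1))
    (hb₁0 : ∀ x ∈ Icc (0:ℝ) 1, b₁ x ≠ 0) (hb₂0 : ∀ x ∈ Icc (0:ℝ) 1, b₂ x ≠ 0)
    (c : ℝ) (J₁ : ℝ → ℝ)
    (hJ : ∀ x ∈ Icc (0:ℝ) 1,
      HasDerivAt J₁ (-((b₁ x)⁻¹ + (b₂ x)⁻¹) * J₁ x + (b₂ x)⁻¹ * c) x)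
    (hper : J₁ 0 = J₁ 1) :
    (∀ x ∈ Icc (0:ℝ) 1, 0 ≤ J₁ x) ∨ (∀ x ∈ Icc (0:ℝ) 1, J₁ x ≤ 0) := by
  have hb₂inv : ContinuousOn (fun x => (b₂ x)⁻¹) (Icc 0 1) := hb₂.inv₀ hb₂0
  have hg : (∀ x ∈ Ioo (0:ℝ) 1, 0 ≤ (b₂ x)⁻¹ * c) ∨ (∀ x ∈ Ioo (0:ℝ) 1, (b₂ x)⁻¹ * c ≤ 0) := by
    obtain hpos | hneg :=
      isPreconnected_Icc.lt_or_gt_of_ne hb₂inv fun x hx => inv_ne_zero (hb₂0 x hx)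
    all_goals obtain hc | hc := le_total 0 c
    · exact .inl fun x hx => mul_nonneg (hpos x (Ioo_subset_Icc_self hx)).le hc
    · exact .inr fun x hx => mul_nonpos_of_nonneg_of_nonpos (hpos x (Ioo_subset_Icc_self hx)).le hc
    · exact .inr fun x hx => mul_nonpos_of_nonpos_of_nonneg (hneg x (Ioo_subset_Icc_self hx)).le hc
    · exact .inl fun x hx => mul_nonneg_of_nonpos_of_nonpos (hneg x (Ioo_subset_Icc_self hx)).le hc
  exact nonneg_or_nonpos_of_hasDerivAt ((hb₁.inv₀ hb₁0).add hb₂inv)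
    (fun x hx => (hJ x hx).continuousAt.continuousWithinAt)
    (fun x hx => hJ x (Ioo_subset_Icc_self hx)) hg hper

/-- A periodic solution of `J₁' = -(b₁⁻¹ + b₂⁻¹) J₁ + b₂⁻¹ c` (with `c ≠ 0` and
`b₁, b₂` continuous, nowhere vanishing on `[0,1]`) does not change sign on `[0,1]`. -/
theorem stmt5 (b₁ b₂ : ℝ → ℝ)
    (hb₁ : ContinuousOn b₁ (Icc 0 1)) (hb₂ : ContinuousOn b₂ (Icc 0 1))
    (hb₁0 : ∀ x ∈ Icc (0:ℝ) 1, b₁ x ≠ 0) (hb₂0 : ∀ x ∈ Icc (0:ℝ) 1, b₂ x ≠ 0)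
    (c : ℝ) (hc : c ≠ 0) (J₁ : ℝ → ℝ)
    (hJ : ∀ x ∈ Icc (0:ℝ) 1,
      HasDerivAt J₁ (-((b₁ x)⁻¹ + (b₂ x)⁻¹) * J₁ x + (b₂ x)⁻¹ * c) x)
    (hper : J₁ 0 = J₁ 1) :
    (∀ x ∈ Icc (0:ℝ) 1, 0 ≤ J₁ x) ∨ (∀ x ∈ Icc (0:ℝ) 1, J₁ x ≤ 0) :=
  stmt5_general b₁ b₂ hb₁ hb₂ hb₁0 hb₂0 c J₁ hJ hper
end

section
/- Let b₁, b₂ : [0,1] → ℝ be continuous and nowhere vanishing, and let J₁ : [0,1] → ℝ be a C¹ solution of J₁'(x) = -(b₁(x)⁻¹ + b₂(x)⁻¹) J₁(x) + b₂(x)⁻¹ c with c ≠ 0 and J₁(0) = 0. Then J₁(1) ≠ 0. -/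
/-!
Multiplying by the integrating factor `exp (∫₀ˣ (b₁⁻¹ + b₂⁻¹))` turns the equation into
`(exp (∫₀ˣ (b₁⁻¹ + b₂⁻¹)) J₁)' = exp (∫₀ˣ (b₁⁻¹ + b₂⁻¹)) b₂⁻¹ c`. The right-hand side is continuous
and nowhere zero, hence of one sign, so by the mean value theorem the transformed function, which
vanishes at `0`, cannot vanish at `1`.
-/

open Filter MeasureTheory Set

theorem IsPreconnected.forall_pos_or_forall_neg {s : Set ℝ} (hs : IsPreconnected s) {f : ℝ → ℝ}
    (hf : ContinuousOn f s) (hf0 : ∀ x ∈ s, f x ≠ 0) :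
    (∀ x ∈ s, 0 < f x) ∨ ∀ x ∈ s, f x < 0 := by
  by_contra! h
  obtain ⟨⟨x, hx, hfx⟩, ⟨y, hy, hfy⟩⟩ := h
  obtain ⟨z, hz, hfz⟩ := hs.intermediate_value hx hy hf ⟨hfx, hfy⟩
  exact hf0 z hz hfz

theorem ContinuousOn.exists_continuousOn_hasDerivAt_Ioo {g : ℝ → ℝ} {a b : ℝ}
    (hg : ContinuousOn g (Icc a b)) :
    ∃ G : ℝ → ℝ, ContinuousOn G (Icc a b) ∧ ∀ x ∈ Ioo a b, HasDerivAt G (g x) x := by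
  rcases le_or_gt a b with hab | hba
  · refine ⟨fun x => ∫ t in a..x, g t, ?_, fun x hx => ?_⟩
    · rw [← uIcc_of_le hab] at hg ⊢
      exact intervalIntegral.continuousOn_primitive_interval hg.integrableOn_uIcc
    · exact intervalIntegral.integral_hasDerivAt_right
        ((hg.mono (Icc_subset_Icc_right hx.2.le)).intervalIntegrable_of_Icc hx.1.le)
        ((hg.mono Ioo_subset_Icc_self).stronglyMeasurableAtFilter isOpen_Ioo x hx)
        (hg.continuousAt (Icc_mem_nhds hx.1 hx.2))
  · exact ⟨0, continuousOn_const, fun x hx => absurd (hx.1.trans hx.2) (not_lt.2 hba.le)⟩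

section LinearODE

variable {p q y : ℝ → ℝ} {a b : ℝ}

theorem pos_of_hasDerivAt_neg_mul_add (hab : a < b) (hp : ContinuousOn p (Icc a b))
    (hy : ContinuousOn y (Icc a b)) (hy' : ∀ x ∈ Ioo a b, HasDerivAt y (-p x * y x + q x) x)
    (hq : ∀ x ∈ Ioo a b, 0 < q x) (hya : y a = 0) : 0 < y b := by
  obtain ⟨P, hP, hP'⟩ := hp.exists_continuousOn_hasDerivAt_Ioo
  set F : ℝ → ℝ := fun x => Real.exp (P x) * y x
  have hF : ContinuousOn F (Icc a b) := (Real.continuous_exp.comp_continuousOn hP).mul hy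
  have hF' : ∀ x ∈ Ioo a b, HasDerivAt F (Real.exp (P x) * q x) x := fun x hx =>
    ((hP' x hx).exp.mul (hy' x hx)).congr_deriv (by ring)
  obtain ⟨ξ, hξ, hslope⟩ := exists_hasDerivAt_eq_slope F _ hab hF hF'
  have hFa : F a = 0 := by simp [F, hya]
  have hFb : 0 < F b := by
    have := hslope ▸ mul_pos (Real.exp_pos (P ξ)) (hq ξ hξ)
    rwa [hFa, sub_zero, div_pos_iff_of_pos_right (sub_pos.2 hab)] at this
  exact pos_of_mul_pos_right hFb (Real.exp_pos _).le

theorem ne_zero_of_hasDerivAt_neg_mul_add (hab : a < b) (hp : ContinuousOn p (Icc a b))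
    (hq : ContinuousOn q (Icc a b)) (hq0 : ∀ x ∈ Icc a b, q x ≠ 0)
    (hy : ContinuousOn y (Icc a b)) (hy' : ∀ x ∈ Ioo a b, HasDerivAt y (-p x * y x + q x) x)
    (hya : y a = 0) : y b ≠ 0 := by
  rcases isPreconnected_Icc.forall_pos_or_forall_neg hq hq0 with hpos | hneg
  · exact (pos_of_hasDerivAt_neg_mul_add hab hp hy hy'
      (fun x hx => hpos x (Ioo_subset_Icc_self hx)) hya).ne'
  · have hy'neg : ∀ x ∈ Ioo a b, HasDerivAt (-y) (-p x * (-y) x + -q x) x := fun x hx =>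
      (hy' x hx).neg.congr_deriv (by simp only [Pi.neg_apply]; ring)
    have := pos_of_hasDerivAt_neg_mul_add hab hp hy.neg hy'neg
      (fun x hx => neg_pos.2 (hneg x (Ioo_subset_Icc_self hx))) (by simp [hya])
    exact (neg_pos.1 this).ne

end LinearODE

/-- If `J₁' = -(b₁⁻¹ + b₂⁻¹) J₁ + b₂⁻¹ c` on `[0,1]` with `c ≠ 0`, `b₁, b₂` continuous and
nowhere vanishing, and `J₁(0) = 0`, then `J₁(1) ≠ 0`. -/
theorem stmt6 (b₁ b₂ : ℝ → ℝ)
    (hb₁ : ContinuousOn b₁ (Icc 0 1)) (hb₂ : ContinuousOn b₂ (Icc 0 1))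
    (hb₁0 : ∀ x ∈ Icc (0:ℝ) 1, b₁ x ≠ 0) (hb₂0 : ∀ x ∈ Icc (0:ℝ) 1, b₂ x ≠ 0)
    (c : ℝ) (hc : c ≠ 0) (J₁ : ℝ → ℝ)
    (hJ : ∀ x ∈ Icc (0:ℝ) 1,
      HasDerivAt J₁ (-((b₁ x)⁻¹ + (b₂ x)⁻¹) * J₁ x + (b₂ x)⁻¹ * c) x)
    (h0 : J₁ 0 = 0) :
    J₁ 1 ≠ 0 :=
  ne_zero_of_hasDerivAt_neg_mul_add zero_lt_one ((hb₁.inv₀ hb₁0).add (hb₂.inv₀ hb₂0))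
    ((hb₂.inv₀ hb₂0).mul continuousOn_const)
    (fun x hx => mul_ne_zero (inv_ne_zero (hb₂0 x hx)) hc)
    (fun x hx => (hJ x hx).continuousAt.continuousWithinAt)
    (fun x hx => hJ x (Ioo_subset_Icc_self hx)) h0
end
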